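/- arXiv:1609.08768 — 2 statements merged into one kernel-verified Lean document; each statement's English description precedes it below -/
import Mathlib

section
/- If a finite directed graph G with filtering thresholds T = (t_1,...,t_n) is not (T+1)-robust, then there exists an assignment of initial opinions in {0, 1/2, 1} such that under any execution of the filtering-based opinion dynamics, the nodes never reach consensus: there are two nonempty disjoint sets S1, S2 of nodes whose opinions remain constantly 0 and 1 respectively for all time. -/
open Finset

variable {V : Type*}

/-- A set `S` is `(T+1)`-reachable: some node `v ∈ S` has at least `t v + 1`
neighbors outside `S`. -/
def TReachable [DecidableEq V] (N : V → Finset V) (t : V → ℕ) (S : Finset V) : Prop :=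
  ∃ v ∈ S, t v + 1 ≤ (N v \ S).card

/-- `(T+1)`-robustness: of every pair of disjoint nonempty subsets, at least one
is `(T+1)`-reachable. -/
def TRobust [Fintype V] [DecidableEq V] (N : V → Finset V) (t : V → ℕ) : Prop :=
  ∀ S₁ S₂ : Finset V, S₁.Nonempty → S₂.Nonempty → Disjoint S₁ S₂ →
    TReachable N t S₁ ∨ TReachable N t S₂

/-- `M` is a valid set of moderate neighbors of `i` at state `x`: it is obtained from
`N i` by removing a set `Rhi` of `min (t i) #` largest opinions strictly above `x i`
and a set `Rlo` of `min (t i) #` smallest opinions strictly below `x i`. -/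
def IsModerate [DecidableEq V] (N : V → Finset V) (t : V → ℕ) (x : V → ℝ) (i : V)
    (M : Finset V) : Prop :=
  ∃ Rhi Rlo : Finset V,
    Rhi ⊆ (N i).filter (fun j => x i < x j) ∧
    Rlo ⊆ (N i).filter (fun j => x j < x i) ∧
    Rhi.card = min (t i) ((N i).filter (fun j => x i < x j)).card ∧
    Rlo.card = min (t i) ((N i).filter (fun j => x j < x i)).card ∧
    (∀ j ∈ Rhi, ∀ l ∈ (N i).filter (fun j' => x i < x j'), l ∉ Rhi → x l ≤ x j) ∧
    (∀ j ∈ Rlo, ∀ l ∈ (N i).filter (fun j' => x j' < x i), l ∉ Rlo → x j ≤ x l) ∧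
    M = N i \ (Rhi ∪ Rlo)

/-- One step of the filtering-based opinion dynamics: each node updates to a convex
combination (with weights lower bounded by `η`) of its own opinion and the opinions of
its moderate neighbors. -/
def IsStep [Fintype V] [DecidableEq V] (N : V → Finset V) (t : V → ℕ) (η : ℝ)
    (x x' : V → ℝ) : Prop :=
  ∀ i, ∃ M : Finset V, IsModerate N t x i M ∧
    ∃ w : V → ℝ, (∀ j ∈ insert i M, η ≤ w j) ∧ (∑ j ∈ insert i M, w j = 1) ∧
      x' i = ∑ j ∈ insert i M, w j * x j

/-!
Let `S₁, S₂` witness non-robustness, and start from `0` on `S₁`, `1` on `S₂` and `1/2`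
elsewhere. Opinions stay in `[0, 1]`, since every update is a convex combination. A node of `S₁`
has at most `t i` neighbours outside `S₁`, and only those can hold opinions above `0`, so it
discards all of them and its opinion remains `0`; symmetrically (negate all opinions) `S₂` stays
at `1`.
-/

section
variable [DecidableEq V] {N : V → Finset V} {t : V → ℕ} {x : V → ℝ} {i : V}
  {M S : Finset V}

lemma not_tReachable_iff : ¬ TReachable N t S ↔ ∀ v ∈ S, #(N v \ S) ≤ t v := by
  simp [TReachable]

lemma IsModerate.neg (h : IsModerate N t x i M) : IsModerate N t (-x) i M := by
  obtain ⟨Rhi, Rlo, hhi, hlo, hhi_card, hlo_card, hhi_max, hlo_min, hM⟩ := h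
  refine ⟨Rlo, Rhi, ?_⟩
  simp only [Pi.neg_apply, neg_lt_neg_iff, neg_le_neg_iff]
  exact ⟨hlo, hhi, hlo_card, hhi_card, hlo_min, hhi_max, by rw [hM, union_comm]⟩

lemma IsModerate.le_of_card_filter_le (h : IsModerate N t x i M)
    (hcard : #{j ∈ N i | x i < x j} ≤ t i) {j : V} (hj : j ∈ M) : x j ≤ x i := by
  obtain ⟨Rhi, Rlo, hhi, -, hhi_card, -, -, -, rfl⟩ := h
  have hRhi : Rhi = {j ∈ N i | x i < x j} :=
    eq_of_subset_of_card_le hhi (by rw [hhi_card, min_eq_right hcard])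
  rw [mem_sdiff, mem_union, hRhi, mem_filter] at hj
  push Not at hj
  exact hj.2.1 hj.1

end

section
variable [Fintype V] [DecidableEq V] {N : V → Finset V} {t : V → ℕ} {η : ℝ}
  {x x' : V → ℝ} {S : Finset V} {c : ℝ}

lemma IsStep.neg (h : IsStep N t η x x') : IsStep N t η (-x) (-x') := by
  intro i
  obtain ⟨M, hM, w, hw, hsum, hx'⟩ := h i
  refine ⟨M, hM.neg, w, hw, hsum, ?_⟩
  simp [hx', sum_neg_distrib]

lemma IsStep.le_of_forall_le_moderate (hη : 0 ≤ η) (h : IsStep N t η x x') (i : V)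
    (hle : ∀ M, IsModerate N t x i M → ∀ j ∈ insert i M, x j ≤ c) : x' i ≤ c := by
  obtain ⟨M, hM, w, hw, hsum, hx'⟩ := h i
  calc x' i = ∑ j ∈ insert i M, w j * x j := hx'
    _ ≤ ∑ j ∈ insert i M, w j * c :=
      sum_le_sum fun j hj => mul_le_mul_of_nonneg_left (hle M hM j hj) (hη.trans (hw j hj))
    _ = c := by rw [← sum_mul, hsum, one_mul]

lemma IsStep.le_of_forall_le (hη : 0 ≤ η) (h : IsStep N t η x x')
    (hx : ∀ j, x j ≤ c) (i : V) :
    x' i ≤ c :=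
  h.le_of_forall_le_moderate hη i fun _ _ j _ => hx j

lemma IsStep.ge_of_forall_ge (hη : 0 ≤ η) (h : IsStep N t η x x')
    (hx : ∀ j, c ≤ x j) (i : V) :
    c ≤ x' i :=
  neg_le_neg_iff.mp (h.neg.le_of_forall_le hη (fun j => neg_le_neg (hx j)) i)

lemma IsStep.le_self_of_card_filter_le (hη : 0 ≤ η) (h : IsStep N t η x x') {i : V}
    (hcard : #{j ∈ N i | x i < x j} ≤ t i) : x' i ≤ x i :=
  h.le_of_forall_le_moderate hη i fun _ hM _ hj =>
    (mem_insert.mp hj).elim (fun hji => hji ▸ le_rfl) (hM.le_of_card_filter_le hcard)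

lemma IsStep.eq_of_not_tReachable (hη : 0 ≤ η) (h : IsStep N t η x x')
    (hS : ¬ TReachable N t S) (hxS : ∀ i ∈ S, x i = c) (hmin : ∀ j, c ≤ x j) :
    ∀ i ∈ S, x' i = c := by
  intro i hi
  have habove : {j ∈ N i | x i < x j} ⊆ N i \ S := fun j hj => by
    rw [mem_filter] at hj
    exact mem_sdiff.mpr ⟨hj.1, fun hjS => hj.2.ne (by rw [hxS i hi, hxS j hjS])⟩
  refine le_antisymm ?_ (h.ge_of_forall_ge hη hmin i)
  have hcard : #{j ∈ N i | x i < x j} ≤ t i :=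
    (card_le_card habove).trans (not_tReachable_iff.mp hS i hi)
  exact hxS i hi ▸ h.le_self_of_card_filter_le hη hcard

lemma eq_of_not_tReachable_of_isStep (hη : 0 ≤ η) {x : ℕ → V → ℝ}
    (hx : ∀ k, IsStep N t η (x k) (x (k + 1))) (hS : ¬ TReachable N t S)
    (hxS : ∀ i ∈ S, x 0 i = c) (hmin : ∀ j, c ≤ x 0 j)
    (k : ℕ) : ∀ i ∈ S, x k i = c := by
  suffices ∀ k, (∀ i ∈ S, x k i = c) ∧ ∀ j, c ≤ x k j from (this k).1
  intro k
  induction k with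
  | zero => exact ⟨hxS, hmin⟩
  | succ k ih =>
    exact ⟨(hx k).eq_of_not_tReachable hη hS ih.1 ih.2, (hx k).ge_of_forall_ge hη ih.2⟩

end

/-- If the network is not `(T+1)`-robust, there are initial opinions in `{0, 1/2, 1}`
under which consensus is never reached: two nonempty disjoint sets keep opinions `0`
and `1` respectively forever, under any execution of the dynamics. -/
theorem stmt0 [Fintype V] [DecidableEq V] (N : V → Finset V) (t : V → ℕ)
    (h : ¬ TRobust N t) :
    ∃ x₀ : V → ℝ, (∀ i, x₀ i ∈ ({0, 1/2, 1} : Set ℝ)) ∧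
      ∃ S₁ S₂ : Finset V, S₁.Nonempty ∧ S₂.Nonempty ∧ Disjoint S₁ S₂ ∧
        ∀ η : ℝ, 0 < η → ∀ x : ℕ → V → ℝ, x 0 = x₀ →
          (∀ k, IsStep N t η (x k) (x (k+1))) →
          ∀ k, (∀ i ∈ S₁, x k i = 0) ∧ (∀ i ∈ S₂, x k i = 1) := by
  simp only [TRobust, not_forall, not_or] at h
  obtain ⟨S₁, S₂, hne₁, hne₂, hdisj, hS₁, hS₂⟩ := h
  refine ⟨fun i => if i ∈ S₁ then 0 else if i ∈ S₂ then 1 else 1/2, fun i => by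
    dsimp only; split_ifs <;> simp, S₁, S₂, hne₁, hne₂, hdisj, ?_⟩
  intro η hη x hx₀ hx k
  refine ⟨eq_of_not_tReachable_of_isStep hη.le hx hS₁ (fun i hi => by simp [hx₀, hi])
    (fun j => by rw [hx₀]; dsimp only; split_ifs <;> norm_num) k, fun i hi => neg_inj.mp ?_⟩
  exact eq_of_not_tReachable_of_isStep hη.le (x := fun k => -x k) (fun k => (hx k).neg) hS₂
    (fun i hi => by simp [hx₀, disjoint_right.mp hdisj hi, hi])
    (fun j => by rw [hx₀]; dsimp only [Pi.neg_apply]; split_ifs <;> norm_num) k i hi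
end

section
/- Let S be a set of m vertices in G(n,p) with independent random thresholds. The probability that EVERY vertex v ∈ S has fewer than t_v + 1 neighbors outside S is at most (Σ_{t=0}^{r̄} q(t) Σ_{j=0}^{t} C(n, j) p^j (1−p)^{n−m−j})^m. -/
/-!
Condition on the thresholds `y`. The event for `v ∈ S` only involves the edges `s(u, v)` with
`u ∉ S`, and these edge sets are disjoint for distinct `v`. Reindexing the edge coordinates by
`S × Sᶜ` therefore turns the edge measure into a product over `S` in which the event is a box, and
each factor is a binomial tail `∑_{j ≤ y v} C(n - m, j) p^j (1 - p)^(n - m - j)`. Integrating this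
product against the i.i.d. thresholds factorises into the `m`-th power of `∑_t q(t) · tail(t)`,
where `q` vanishes beyond `rbar`.
-/

open Finset MeasureTheory
open scoped ENNReal NNReal

namespace MeasureTheory.Measure

variable {α : Type*} [MeasurableSpace α]

theorem pi_map_comp_of_injective {ι κ : Type*} [Fintype ι] [Fintype κ] (μ : ι → Measure α)
    [∀ i, IsProbabilityMeasure (μ i)] {f : κ → ι} (hf : f.Injective) :
    (Measure.pi μ).map (fun g => g ∘ f) = Measure.pi fun k => μ (f k) := by
  classical
  refine (Measure.pi_eq fun s hs => ?_).symm
  set t : ι → Set α := Function.extend f s fun _ => Set.univ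
  have ht_apply : ∀ k, t (f k) = s k := hf.extend_apply _ _
  have ht_of_notMem : ∀ i ∉ univ.image f, t i = Set.univ := fun i hi =>
    Function.extend_apply' _ _ _ (by simpa using hi)
  have hpre : (fun g : ι → α => g ∘ f) ⁻¹' Set.univ.pi s = Set.univ.pi t := by
    ext g
    simp only [Set.mem_preimage, Set.mem_univ_pi, Function.comp_apply]
    refine ⟨fun h i => ?_, fun h k => ht_apply k ▸ h (f k)⟩
    by_cases hi : i ∈ univ.image f
    · obtain ⟨k, -, rfl⟩ := mem_image.1 hi
      exact (ht_apply k).symm ▸ h k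
    · simp [ht_of_notMem i hi]
  rw [map_apply (by fun_prop) (.univ_pi hs), hpre, pi_pi,
    ← prod_subset (subset_univ (univ.image f)) fun i _ hi => by
      rw [ht_of_notMem i hi, measure_univ],
    prod_image hf.injOn]
  simp only [ht_apply]

theorem pi_map_curry {ι κ : Type*} [Fintype ι] [Fintype κ] (μ : ι → κ → Measure α)
    [∀ i j, IsProbabilityMeasure (μ i j)] :
    (Measure.pi fun p : ι × κ => μ p.1 p.2).map Function.curry =
      Measure.pi fun i => Measure.pi (μ i) := by
  simp_rw [← infinitePi_eq_pi]
  exact infinitePi_map_curry μ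

end MeasureTheory.Measure

theorem MeasureTheory.lintegral_pi_finset_prod_comp {ι α : Type*} [Fintype ι]
    [MeasurableSpace α] (μ : Measure α) [IsProbabilityMeasure μ] (S : Finset ι)
    {f : α → ℝ≥0∞} (hf : Measurable f) :
    ∫⁻ y, ∏ i ∈ S, f (y i) ∂(Measure.pi fun _ : ι => μ) = (∫⁻ a, f a ∂μ) ^ #S := by
  refine (ProbabilityTheory.lintegral_prod_eq_prod_lintegral_of_indepFun S
      (fun i (y : ι → α) => f (y i)) (ProbabilityTheory.iIndepFun_pi fun _ => hf.aemeasurable)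
      fun i => hf.comp (measurable_pi_apply i)).trans ?_
  simp_rw [(measurePreserving_eval (fun _ : ι => μ) _).lintegral_comp hf, prod_const]

theorem PMF.lintegral_toMeasure {α : Type*} [MeasurableSpace α] [Countable α]
    [MeasurableSingletonClass α] (q : PMF α) (f : α → ℝ≥0∞) :
    ∫⁻ a, f a ∂q.toMeasure = ∑' a, q a * f a := by
  simp_rw [lintegral_countable', q.toMeasure_apply_singleton _ (measurableSet_singleton _),
    mul_comm]

section Bernoulli

variable {T : Type*} [Fintype T] {p : ℝ≥0} (hp : p ≤ 1)

theorem pi_bernoulli_singleton_indicator [DecidableEq T] (A : Finset T) :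
    Measure.pi (fun _ : T => (PMF.bernoulli p hp).toMeasure) {fun u => decide (u ∈ A)} =
      (p : ℝ≥0∞) ^ #A * (1 - (p : ℝ≥0∞)) ^ (Fintype.card T - #A) := by
  rw [Measure.pi_singleton]
  simp only [PMF.toMeasure_apply_singleton _ _ (measurableSet_singleton _), PMF.bernoulli_apply]
  have hcoe : ((1 - p : ℝ≥0) : ℝ≥0∞) = 1 - p := ENNReal.coe_sub.trans (by simp)
  simp only [Bool.cond_decide, apply_ite ((↑) : ℝ≥0 → ℝ≥0∞), hcoe, prod_ite, prod_const]
  rw [filter_not, filter_mem_eq_of_subset (subset_univ A), card_univ_diff]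

theorem pi_bernoulli_card_le_le (t : ℕ) :
    Measure.pi (fun _ : T => (PMF.bernoulli p hp).toMeasure) {h | #{u | h u = true} ≤ t} ≤
      ∑ j ∈ range (t + 1), (Fintype.card T).choose j * (p : ℝ≥0∞) ^ j *
        (1 - (p : ℝ≥0∞)) ^ (Fintype.card T - j) := by
  classical
  set N := Fintype.card T
  have hcover : {h : T → Bool | #{u | h u = true} ≤ t} ⊆
      ⋃ A ∈ (univ : Finset T).powerset.filter (#· ≤ t), {fun u => decide (u ∈ A)} := by
    intro h hh
    refine Set.mem_iUnion₂.2 ⟨univ.filter fun u => h u = true, by simpa using hh, ?_⟩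
    ext u
    simp
  calc _ ≤ ∑ A ∈ (univ : Finset T).powerset.filter (#· ≤ t),
          Measure.pi (fun _ : T => (PMF.bernoulli p hp).toMeasure) {fun u => decide (u ∈ A)} :=
        (measure_mono hcover).trans (measure_biUnion_finset_le _ _)
    _ = ∑ j ∈ (range (N + 1)).filter (· ≤ t),
          N.choose j * (p : ℝ≥0∞) ^ j * (1 - (p : ℝ≥0∞)) ^ (N - j) := by
        simp_rw [pi_bernoulli_singleton_indicator, sum_filter]
        rw [sum_powerset_apply_card
          (fun j => if j ≤ t then (p : ℝ≥0∞) ^ j * (1 - (p : ℝ≥0∞)) ^ (N - j) else 0)]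
        simp only [card_univ, nsmul_eq_mul, mul_ite, mul_zero, ← sum_filter, mul_assoc, N]
    _ ≤ _ := sum_le_sum_of_subset fun j hj => by
        simp only [mem_filter, mem_range] at hj ⊢
        omega

end Bernoulli

theorem injective_sym2_mk_notMem_mem {V : Type*} (S : Finset V) :
    Function.Injective fun x : S × {u // u ∉ S} => s(x.2.1, x.1.1) := by
  rintro ⟨⟨v, hv⟩, ⟨u, hu⟩⟩ ⟨⟨v', hv'⟩, ⟨u', hu'⟩⟩ h
  rcases Sym2.eq_iff.1 h with ⟨rfl, rfl⟩ | ⟨rfl, -⟩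
  · rfl
  · exact absurd hv' hu

section DegreeOutside

variable {V : Type*} [Fintype V] [DecidableEq V]

def degreeOutside (S : Finset V) (g : Sym2 V → Bool) (v : V) : ℕ :=
  #{u ∈ univ \ S | g s(u, v) = true}

theorem degreeOutside_eq_card_subtype (S : Finset V) (g : Sym2 V → Bool) (v : V) :
    degreeOutside S g v = #{u : {u // u ∉ S} | g s(u.1, v) = true} := by
  rw [degreeOutside, card_filter, card_filter,
    sum_subtype (univ \ S) (p := (· ∉ S)) (by simp)]

theorem pi_bernoulli_forall_degreeOutside_le {p : ℝ≥0} (hp : p ≤ 1) (S : Finset V)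
    (τ : V → ℕ) :
    Measure.pi (fun _ : Sym2 V => (PMF.bernoulli p hp).toMeasure)
        {g | ∀ v ∈ S, degreeOutside S g v ≤ τ v} ≤
      ∏ v ∈ S, ∑ j ∈ range (τ v + 1), (Fintype.card V - #S).choose j * (p : ℝ≥0∞) ^ j *
        (1 - (p : ℝ≥0∞)) ^ (Fintype.card V - #S - j) := by
  set f : S × {u // u ∉ S} → Sym2 V := fun x => s(x.2.1, x.1.1)
  have hmap : (Measure.pi fun _ : Sym2 V => (PMF.bernoulli p hp).toMeasure).map
      (fun g => Function.curry (g ∘ f)) =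
        Measure.pi fun _ : S => Measure.pi fun _ : {u // u ∉ S} =>
          (PMF.bernoulli p hp).toMeasure := by
    rw [show (fun g => Function.curry (g ∘ f)) = Function.curry ∘ (fun g => g ∘ f) from rfl,
      ← Measure.map_map (by fun_prop) (by fun_prop),
      Measure.pi_map_comp_of_injective _ (injective_sym2_mk_notMem_mem S),
      Measure.pi_map_curry (fun _ _ => (PMF.bernoulli p hp).toMeasure)]
  have hbox : {g : Sym2 V → Bool | ∀ v ∈ S, degreeOutside S g v ≤ τ v} =
      (fun g => Function.curry (g ∘ f)) ⁻¹'
        Set.univ.pi fun v : S => {h | #{u | h u = true} ≤ τ v} := by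
    ext g
    simp only [degreeOutside_eq_card_subtype, Set.mem_ofPred_eq, Set.mem_preimage, Set.mem_pi,
      Set.mem_univ, Function.curry_apply, Function.comp_apply, forall_const, Subtype.forall, f]
    rfl
  have hcard : Fintype.card {u // u ∉ S} = Fintype.card V - #S := by simp
  rw [hbox, ← Measure.map_apply (by fun_prop) .of_discrete, hmap, Measure.pi_pi, ← hcard,
    ← prod_coe_sort S]
  exact prod_le_prod' fun v _ => pi_bernoulli_card_le_le hp (τ v)

end DegreeOutside

/-- In the Erdős–Rényi random graph `G(n,p)` with independent random vertex thresholds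
drawn from `q` (supported on `{0,…,rbar}`): for a fixed set `S` of `m` vertices, the
probability that EVERY vertex `v ∈ S` has fewer than `t_v + 1` neighbors outside `S`
is at most `(∑_{t=0}^{rbar} q(t) ∑_{j=0}^{t} C(n,j) p^j (1−p)^{n−m−j})^m`. -/
theorem stmt15 (n : ℕ) (p : ENNReal) (hp : p ≤ 1) (q : PMF ℕ) (rbar : ℕ)
    (hq : ∀ t, rbar < t → q t = 0)
    (S : Finset (Fin n)) (m : ℕ) (hm : S.card = m)
    (μ : Measure ((Sym2 (Fin n) → Bool) × (Fin n → ℕ)))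
    (hμ : μ = (Measure.pi fun _ : Sym2 (Fin n) => (PMF.bernoulli p.toNNReal (by simpa using ENNReal.toNNReal_mono ENNReal.one_ne_top hp)).toMeasure).prod
      (Measure.pi fun _ : Fin n => q.toMeasure)) :
    μ {ω | ∀ v ∈ S, ((Finset.univ \ S).filter
        (fun u => ω.1 (s(u, v)) = true)).card < ω.2 v + 1} ≤
      (∑ t ∈ Finset.range (rbar + 1), q t *
        ∑ j ∈ Finset.range (t + 1),
          (n.choose j : ENNReal) * p ^ j * (1 - p) ^ (n - m - j)) ^ m := by
  subst hμ hm
  have hp_coe : (p.toNNReal : ℝ≥0∞) = p :=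
    ENNReal.coe_toNNReal (ne_top_of_le_ne_top ENNReal.one_ne_top hp)
  set b : ℕ → ℝ≥0∞ := fun t => ∑ j ∈ range (t + 1),
    (n - #S).choose j * p ^ j * (1 - p) ^ (n - #S - j)
  calc _ = ∫⁻ y, Measure.pi (fun _ : Sym2 (Fin n) => (PMF.bernoulli p.toNNReal _).toMeasure)
          {g | ∀ v ∈ S, degreeOutside S g v ≤ y v} ∂(Measure.pi fun _ : Fin n => q.toMeasure) := by
        rw [Measure.prod_apply_symm .of_discrete]
        simp only [degreeOutside, Nat.lt_succ_iff]
        rfl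
    _ ≤ ∫⁻ y, ∏ v ∈ S, b (y v) ∂(Measure.pi fun _ : Fin n => q.toMeasure) :=
        lintegral_mono fun y => by
          simpa [hp_coe, b] using pi_bernoulli_forall_degreeOutside_le (p := p.toNNReal) _ S y
    _ = (∑' t, q t * b t) ^ #S := by
        rw [lintegral_pi_finset_prod_comp _ _ .of_discrete, PMF.lintegral_toMeasure]
    _ = (∑ t ∈ range (rbar + 1), q t * b t) ^ #S := by
        rw [tsum_eq_sum (s := range (rbar + 1)) fun t ht => by
          rw [hq t (by simpa using ht), zero_mul]]
    _ ≤ _ := by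
        simp only [b]
        gcongr
        exact Nat.sub_le n #S
end
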